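/- Let f : ZMod 4 → Fin 3 be a cyclic word containing the colors r and b each exactly twice and the color p not at all. Then f can be extended, by inserting two new elements of color p (at arbitrary gaps), to a cyclic word of length 6 satisfying the P3-constraint if and only if r and b do not alternate in f, i.e., the two occurrences of r are cyclically adjacent (pattern r, r, b, b rather than r, b, r, b). -/

import Mathlib

/-! Inserting new letters into a cyclic word never changes whether two of the old colors
alternate: the old positions embed into the new word by the strictly monotone map
`Fin.succAbove`, and alternation only depends on the cyclic order of positions. So a
P3-extension of `f` forces red and blue not to alternate in `f`, which for a word with two
reds and no purple means the reds are adjacent. Conversely `r r b b` extends to `r p r b p b`. -/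

namespace SATR

def red : Fin 3 := 0
def blue : Fin 3 := 1
def purple : Fin 3 := 2

/-- `x` lies strictly inside the cyclic arc from `a` to `c` (in the `+1` direction). -/
def arcBetween {n : ℕ} [NeZero n] (a x c : ZMod n) : Prop :=
  0 < (x - a).val ∧ (x - a).val < (c - a).val

/-- Colors `c` and `c'` alternate in the cyclic word `f`: there are two positions of
color `c` such that each of the two open cyclic arcs they determine contains a
position of color `c'`. -/
def Alternates {n : ℕ} [NeZero n] (f : ZMod n → Fin 3) (c c' : Fin 3) : Prop :=
  ∃ i1 i2 j1 j2 : ZMod n, f i1 = c ∧ f i2 = c ∧ i1 ≠ i2 ∧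
    f j1 = c' ∧ f j2 = c' ∧ arcBetween i1 j1 i2 ∧ arcBetween i2 j2 i1

/-- The K3-constraint: all three pairs of distinct colors alternate. -/
def K3Constraint (w : ZMod 6 → Fin 3) : Prop :=
  Alternates w red blue ∧ Alternates w red purple ∧ Alternates w blue purple

/-- The P3-constraint: r–p and b–p alternate, r–b do not. -/
def P3Constraint (w : ZMod 6 → Fin 3) : Prop :=
  Alternates w red purple ∧ Alternates w blue purple ∧ ¬ Alternates w red blue

/-- Number of occurrences of color `c` in the cyclic word `f`. -/
def count {n : ℕ} [NeZero n] (f : ZMod n → Fin 3) (c : Fin 3) : ℕ :=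
  (Finset.univ.filter fun i => f i = c).card

/-- Insert a new element of color `c` into the gap right after position `g`. -/
def insertAt {n : ℕ} [NeZero n] (f : ZMod n → Fin 3) (g : ZMod n) (c : Fin 3) :
    ZMod (n + 1) → Fin 3 :=
  fun j =>
    if j.val = g.val + 1 then c
    else if j.val ≤ g.val then f (j.val : ZMod n)
    else f ((j.val - 1 : ℕ) : ZMod n)

/-- Insert `c1` right after position `g`, and `c2` immediately (cyclically) after `c1`,
so the two new elements are cyclically consecutive. -/
def insertPair {n : ℕ} [NeZero n] (f : ZMod n → Fin 3) (g : ZMod n) (c1 c2 : Fin 3) :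
    ZMod (n + 2) → Fin 3 :=
  insertAt (insertAt f g c1) ((g.val + 1 : ℕ) : ZMod (n + 1)) c2

/-- The cyclic distance between two positions: the minimum of the two arc lengths. -/
def cycDist {n : ℕ} [NeZero n] (i j : ZMod n) : ℕ :=
  min (j - i).val (i - j).val

instance {n : ℕ} [NeZero n] (a x c : ZMod n) : Decidable (arcBetween a x c) :=
  inferInstanceAs (Decidable (_ ∧ _))

instance {n : ℕ} [NeZero n] (f : ZMod n → Fin 3) (c c' : Fin 3) :
    Decidable (Alternates f c c') :=
  inferInstanceAs (Decidable (∃ _, _))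

instance (w : ZMod 6 → Fin 3) : Decidable (P3Constraint w) :=
  inferInstanceAs (Decidable (_ ∧ _))

variable {m : ℕ}

theorem arcBetween_iff_sbtw {a x c : ZMod (m + 1)} : arcBetween a x c ↔ sbtw a x c := by
  revert a x c
  show ∀ a x c : Fin (m + 1), 0 < (x - a).val ∧ (x - a).val < (c - a).val ↔ sbtw a x c
  intro a x c
  have := x.isLt
  rcases le_or_gt a x with hax | hax <;> rcases le_or_gt a c with hac | hac <;>
    simp only [Fin.sbtw_iff, Fin.coe_sub_iff_le.2, Fin.coe_sub_iff_lt.2, hax, hac, Fin.lt_def,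
      true_and, and_true] <;>
    simp only [Fin.le_def, Fin.lt_def] at hax hac <;> omega

theorem alternates_iff_sbtw {f : ZMod (m + 1) → Fin 3} {c c' : Fin 3} :
    Alternates f c c' ↔ ∃ i1 i2 j1 j2 : ZMod (m + 1), f i1 = c ∧ f i2 = c ∧
      f j1 = c' ∧ f j2 = c' ∧ sbtw i1 j1 i2 ∧ sbtw i2 j2 i1 := by
  simp only [Alternates, arcBetween_iff_sbtw]
  constructor
  · rintro ⟨i1, i2, j1, j2, h1, h2, -, h3, h4, h5, h6⟩
    exact ⟨i1, i2, j1, j2, h1, h2, h3, h4, h5, h6⟩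
  · rintro ⟨i1, i2, j1, j2, h1, h2, h3, h4, h5, h6⟩
    refine ⟨i1, i2, j1, j2, h1, h2, ?_, h3, h4, h5, h6⟩
    rintro rfl
    exact sbtw_irrefl_left_right h5

theorem alternates_iff_of_strictMono {k : ℕ} {w : ZMod (k + 1) → Fin 3}
    {f : ZMod (m + 1) → Fin 3} {c c' : Fin 3} {e : Fin (m + 1) → Fin (k + 1)}
    (he : StrictMono e) (hwe : ∀ i, w (e i) = f i)
    (hrange : ∀ j, w j = c ∨ w j = c' → j ∈ Set.range e) :
    Alternates w c c' ↔ Alternates f c c' := by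
  have hsbtw (a b d : Fin (m + 1)) : sbtw (e a) (e b) (e d) ↔ sbtw a b d := by
    simp only [Fin.sbtw_iff, he.lt_iff_lt]
  rw [alternates_iff_sbtw, alternates_iff_sbtw]
  constructor
  · rintro ⟨i1, i2, j1, j2, h1, h2, h3, h4, h5, h6⟩
    obtain ⟨i1, rfl⟩ := hrange i1 (.inl h1)
    obtain ⟨i2, rfl⟩ := hrange i2 (.inl h2)
    obtain ⟨j1, rfl⟩ := hrange j1 (.inr h3)
    obtain ⟨j2, rfl⟩ := hrange j2 (.inr h4)
    rw [hwe] at h1 h2 h3 h4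
    exact ⟨i1, i2, j1, j2, h1, h2, h3, h4, (hsbtw _ _ _).1 h5, (hsbtw _ _ _).1 h6⟩
  · rintro ⟨i1, i2, j1, j2, h1, h2, h3, h4, h5, h6⟩
    exact ⟨e i1, e i2, e j1, e j2, (hwe i1).trans h1, (hwe i2).trans h2, (hwe j1).trans h3,
      (hwe j2).trans h4, (hsbtw _ _ _).2 h5, (hsbtw _ _ _).2 h6⟩

theorem insertAt_succAbove (f : ZMod (m + 1) → Fin 3) (g : ZMod (m + 1)) (c : Fin 3)
    (i : Fin (m + 1)) : insertAt f g c ((Fin.succ g).succAbove i) = f i := by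
  revert f g
  show ∀ (f : Fin (m + 1) → Fin 3) (g : Fin (m + 1)), insertAt f g c (g.succ.succAbove i) = f i
  intro f g
  simp only [insertAt, ZMod.val]
  rcases le_or_gt i g with hig | hig
  · rw [Fin.succAbove_of_castSucc_lt _ _ (Fin.castSucc_lt_succ_iff.2 hig)]
    rw [Fin.le_def] at hig
    simp only [Fin.val_castSucc, show (i : ℕ) ≠ g + 1 by omega, hig, if_true, if_false]
    exact congrArg f (Fin.cast_val_eq_self i)
  · rw [Fin.succAbove_of_le_castSucc _ _ (Fin.succ_le_castSucc_iff.2 hig)]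
    rw [Fin.lt_def] at hig
    simp only [Fin.val_succ, Nat.add_sub_cancel, show (i : ℕ) + 1 ≠ g + 1 by omega,
      show ¬ (i : ℕ) + 1 ≤ g by omega, if_false]
    exact congrArg f (Fin.cast_val_eq_self i)

theorem insertAt_succ_self (f : ZMod (m + 1) → Fin 3) (g : ZMod (m + 1)) (c : Fin 3) :
    insertAt f g c (Fin.succ g) = c :=
  if_pos rfl

theorem alternates_insertAt_iff {f : ZMod (m + 1) → Fin 3} {g : ZMod (m + 1)} {a b c : Fin 3}
    (hca : c ≠ a) (hcb : c ≠ b) : Alternates (insertAt f g c) a b ↔ Alternates f a b :=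
  alternates_iff_of_strictMono (Fin.strictMono_succAbove _) (insertAt_succAbove f g c)
    fun j hj => Fin.exists_succAbove_eq <| by
      rintro rfl
      rw [insertAt_succ_self] at hj
      tauto

theorem ne_of_count_eq_zero {n : ℕ} [NeZero n] {f : ZMod n → Fin 3} {c : Fin 3}
    (h : count f c = 0) (i : ZMod n) : f i ≠ c := by
  rw [count, Finset.card_eq_zero, Finset.filter_eq_empty_iff] at h
  exact h (Finset.mem_univ i)

theorem eq_or_eq_of_count_eq_two {n : ℕ} [NeZero n] {f : ZMod n → Fin 3} {c : Fin 3}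
    (h : count f c = 2) {a b j : ZMod n} (hab : a ≠ b) (ha : f a = c) (hb : f b = c)
    (hj : f j = c) : j = a ∨ j = b := by
  have hsub : {a, b} ⊆ Finset.univ.filter fun i => f i = c := by
    simp [Finset.insert_subset_iff, ha, hb]
  have heq := Finset.eq_of_subset_of_card_le hsub (by rw [← count, h, Finset.card_pair hab])
  have hmem : j ∈ ({a, b} : Finset (ZMod n)) := heq ▸ by simp [hj]
  simpa using hmem

theorem eq_blue_of_ne_red_of_ne_purple {x : Fin 3} (hr : x ≠ red) (hp : x ≠ purple) :
    x = blue := by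
  revert x; decide

theorem alternates_red_blue_of_not_reds_adjacent {f : ZMod 4 → Fin 3} (hr : count f red = 2)
    (hp : count f purple = 0) (hadj : ¬∃ i, f i = red ∧ f (i + 1) = red) :
    Alternates f red blue := by
  push Not at hadj
  obtain ⟨i, j, hi, hj, hij⟩ := Finset.one_lt_card_iff.1 (show 1 < count f red by omega)
  simp only [Finset.mem_filter, Finset.mem_univ, true_and] at hi hj
  have hnext := eq_blue_of_ne_red_of_ne_purple (hadj i hi) (ne_of_count_eq_zero hp (i + 1))
  have hprev : f (i + 3) = blue := by
    refine eq_blue_of_ne_red_of_ne_purple (fun h => hadj _ h ?_) (ne_of_count_eq_zero hp _)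
    rwa [show i + 3 + 1 = i by grind]
  have hopp : f (i + 2) = red := by
    have hcases : ∀ d : ZMod 4, d = 0 ∨ d = 1 ∨ d = 2 ∨ d = 3 := by decide
    rcases hcases (j - i) with h | h | h | h <;> rw [sub_eq_iff_eq_add'] at h <;> subst h
    · simp at hij
    · exact absurd (hnext.symm.trans hj) (by decide)
    · exact hj
    · exact absurd (hprev.symm.trans hj) (by decide)
  have harcs : ∀ i : ZMod 4, arcBetween i (i + 1) (i + 2) ∧ arcBetween (i + 2) (i + 3) i := by
    decide
  exact ⟨i, i + 2, i + 1, i + 3, hi, hopp, by grind, hnext, hprev, harcs i⟩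

def adjacentRedsWord (i : ZMod 4) : ZMod 4 → Fin 3 :=
  fun j => if j = i ∨ j = i + 1 then red else blue

theorem eq_adjacentRedsWord {f : ZMod 4 → Fin 3} (hr : count f red = 2)
    (hp : count f purple = 0) {i : ZMod 4} (h0 : f i = red) (h1 : f (i + 1) = red) :
    f = adjacentRedsWord i := by
  funext j
  unfold adjacentRedsWord
  split_ifs with hj
  · rcases hj with rfl | rfl <;> assumption
  · refine eq_blue_of_ne_red_of_ne_purple (fun h => hj ?_) (ne_of_count_eq_zero hp j)
    exact eq_or_eq_of_count_eq_two hr (by grind) h0 h1 h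

theorem exists_p3Constraint_insertAt_adjacentRedsWord (i : ZMod 4) :
    ∃ (g1 : ZMod 4) (g2 : ZMod 5),
      P3Constraint (insertAt (insertAt (adjacentRedsWord i) g1 purple) g2 purple) := by
  -- the second purple goes between the two blues, right after the new position of `i + 2`
  refine ⟨i, Fin.succAbove (Fin.succ i) (i + 2 : ZMod 4), ?_⟩
  revert i
  decide

theorem p3_minus_p_p_iff_reds_adjacent_general
    (f : ZMod 4 → Fin 3)
    (hr : count f red = 2) (hp : count f purple = 0) :
    (∃ (g1 : ZMod 4) (g2 : ZMod 5),
        P3Constraint (insertAt (insertAt f g1 purple) g2 purple)) ↔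
      (∃ i : ZMod 4, f i = red ∧ f (i + 1) = red) := by
  constructor
  · rintro ⟨g1, g2, -, -, hrb⟩
    by_contra hadj
    refine hrb ?_
    rw [alternates_insertAt_iff (by decide) (by decide),
      alternates_insertAt_iff (by decide) (by decide)]
    exact alternates_red_blue_of_not_reds_adjacent hr hp hadj
  · rintro ⟨i, h0, h1⟩
    rw [eq_adjacentRedsWord hr hp h0 h1]
    exact exists_p3Constraint_insertAt_adjacentRedsWord i

/-- The P3^{-p,p}-constraint: a length-4 cyclic word with two reds and two blues
(and no purple) can be extended to a P3-satisfying length-6 word by inserting two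
new purples at arbitrary gaps iff red and blue do not alternate, i.e. the two reds
are cyclically adjacent. -/
theorem p3_minus_p_p_iff_reds_adjacent
    (f : ZMod 4 → Fin 3)
    (hr : count f red = 2) (hb : count f blue = 2) (hp : count f purple = 0) :
    (∃ (g1 : ZMod 4) (g2 : ZMod 5),
        P3Constraint (insertAt (insertAt f g1 purple) g2 purple)) ↔
      (∃ i : ZMod 4, f i = red ∧ f (i + 1) = red) :=
  p3_minus_p_p_iff_reds_adjacent_general f hr hp

end SATR
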